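/- Let f : ℝ² → ℝ be smooth, let a^f(x,y,p) = f_xx(x,y) + 2f_xy(x,y)p + f_yy(x,y)p², and let I(x,y,p) = (a^f)_x(x,y,p) + p·(a^f)_y(x,y,p). Let P = (x₀,y₀,p₀) be a point with a^f(P) = 0, (a^f)_p(P) = 0 (P lies on the criminant, so (x₀,y₀) is a parabolic point with asymptotic slope p₀), I(P) = 0 (so (x₀,y₀) is a godron), and ∇a^f(P) ≠ 0 (the function a^f has no critical point at P, which holds whenever the parabolic curve is smooth there). Then ∂I/∂p (P) ≠ 0. In particular the tangent direction at P of the π^∨-contour curve {a^f = 0, I = 0} is not vertical, so the curve of inflections (the flecnodal curve) cannot have a cusp at the godron (x₀,y₀). The key identity is ∂I/∂p = 3·(a^f)_y, valid at every point of ℝ³. -/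

import Mathlib

/-!
Write `a^f = A + 2 B p + C p²` with `A = f_xx`, `B = f_xy`, `C = f_yy`. Differentiating
`I = a_x + p a_y` in `p` gives `I_p = (A_y + 2 B_x) + (4 B_y + 2 C_x) p + 3 C_y p²`, and the
symmetry of third derivatives (`B_x = A_y`, `C_x = B_y`) turns this into `3 a_y`.
So if `I_p` vanished at `P`, then `a_y(P) = 0`, and `I(P) = 0` would force `a_x(P) = 0`;
together with `a_p(P) = 0` this makes `P` a critical point of `a^f`.
-/

noncomputable section

/-- Partial derivative in the first variable of a function on `ℝ × ℝ`. -/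
def pdx (f : ℝ × ℝ → ℝ) (q : ℝ × ℝ) : ℝ := deriv (fun t => f (t, q.2)) q.1

/-- Partial derivative in the second variable of a function on `ℝ × ℝ`. -/
def pdy (f : ℝ × ℝ → ℝ) (q : ℝ × ℝ) : ℝ := deriv (fun t => f (q.1, t)) q.2

/-- Partial derivative in `x` of a function on `ℝ × ℝ × ℝ` (coordinates `(x, y, p)`). -/
def pDx (F : ℝ × ℝ × ℝ → ℝ) (q : ℝ × ℝ × ℝ) : ℝ := deriv (fun t => F (t, q.2.1, q.2.2)) q.1

/-- Partial derivative in `y` of a function on `ℝ × ℝ × ℝ` (coordinates `(x, y, p)`). -/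
def pDy (F : ℝ × ℝ × ℝ → ℝ) (q : ℝ × ℝ × ℝ) : ℝ := deriv (fun t => F (q.1, t, q.2.2)) q.2.1

/-- Partial derivative in `p` of a function on `ℝ × ℝ × ℝ` (coordinates `(x, y, p)`). -/
def pDp (F : ℝ × ℝ × ℝ → ℝ) (q : ℝ × ℝ × ℝ) : ℝ := deriv (fun t => F (q.1, q.2.1, t)) q.2.2

/-- The asymptotic IDE function `a^f(x,y,p) = f_xx + 2 f_xy p + f_yy p²`. -/
def aIDE (f : ℝ × ℝ → ℝ) (q : ℝ × ℝ × ℝ) : ℝ :=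
  pdx (pdx f) (q.1, q.2.1) + 2 * pdy (pdx f) (q.1, q.2.1) * q.2.2
    + pdy (pdy f) (q.1, q.2.1) * q.2.2 ^ 2

/-- The inflection function `I^F(x,y,p) = F_x + p·F_y`; its zero set is the flec-surface. -/
def inflFun (F : ℝ × ℝ × ℝ → ℝ) (q : ℝ × ℝ × ℝ) : ℝ := pDx F q + q.2.2 * pDy F q

variable {g : ℝ × ℝ → ℝ}

theorem HasFDerivAt.pdx_eq {L : ℝ × ℝ →L[ℝ] ℝ} {q : ℝ × ℝ} (h : HasFDerivAt g L q) :
    pdx g q = L (1, 0) :=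
  (h.comp_hasDerivAt q.1 ((hasDerivAt_id q.1).prodMk (hasDerivAt_const q.1 q.2))).deriv

theorem HasFDerivAt.pdy_eq {L : ℝ × ℝ →L[ℝ] ℝ} {q : ℝ × ℝ} (h : HasFDerivAt g L q) :
    pdy g q = L (0, 1) :=
  (h.comp_hasDerivAt q.2 ((hasDerivAt_const q.2 q.1).prodMk (hasDerivAt_id q.2))).deriv

theorem hasDerivAt_pdx {x y : ℝ} (hg : DifferentiableAt ℝ g (x, y)) :
    HasDerivAt (fun t => g (t, y)) (pdx g (x, y)) x :=
  (hg.comp x (differentiableAt_id.prodMk (differentiableAt_const y))).hasDerivAt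

theorem hasDerivAt_pdy {x y : ℝ} (hg : DifferentiableAt ℝ g (x, y)) :
    HasDerivAt (fun t => g (x, t)) (pdy g (x, y)) y :=
  (hg.comp y ((differentiableAt_const x).prodMk differentiableAt_id)).hasDerivAt

theorem pdx_eq_fderiv (hg : Differentiable ℝ g) : pdx g = fun q => fderiv ℝ g q (1, 0) :=
  funext fun q => (hg q).hasFDerivAt.pdx_eq

theorem pdy_eq_fderiv (hg : Differentiable ℝ g) : pdy g = fun q => fderiv ℝ g q (0, 1) :=
  funext fun q => (hg q).hasFDerivAt.pdy_eq

theorem ContDiff.pdx {n : WithTop ℕ∞} (hg : ContDiff ℝ (n + 1) g) : ContDiff ℝ n (pdx g) := by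
  rw [pdx_eq_fderiv (hg.differentiable (by simp))]
  exact (hg.fderiv_right le_rfl).clm_apply contDiff_const

theorem ContDiff.pdy {n : WithTop ℕ∞} (hg : ContDiff ℝ (n + 1) g) : ContDiff ℝ n (pdy g) := by
  rw [pdy_eq_fderiv (hg.differentiable (by simp))]
  exact (hg.fderiv_right le_rfl).clm_apply contDiff_const

theorem pdx_pdy_comm (hg : ContDiff ℝ 2 g) : pdx (pdy g) = pdy (pdx g) := by
  have hdg : Differentiable ℝ g := hg.differentiable (by simp)
  have hd2 : Differentiable ℝ (fderiv ℝ g) :=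
    (hg.fderiv_right (m := 1) (by norm_num)).differentiable one_ne_zero
  funext q
  have hsymm := (hg.contDiffAt (x := q)).isSymmSndFDerivAt (by simp)
  rw [pdy_eq_fderiv hdg, pdx_eq_fderiv hdg,
    ((hd2 q).hasFDerivAt.clm_apply (hasFDerivAt_const _ q)).pdx_eq,
    ((hd2 q).hasFDerivAt.clm_apply (hasFDerivAt_const _ q)).pdy_eq]
  simpa using hsymm (1, 0) (0, 1)

def quadraticInP (A B C : ℝ × ℝ → ℝ) (q : ℝ × ℝ × ℝ) : ℝ :=
  A (q.1, q.2.1) + 2 * B (q.1, q.2.1) * q.2.2 + C (q.1, q.2.1) * q.2.2 ^ 2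

theorem aIDE_eq_quadraticInP (f : ℝ × ℝ → ℝ) :
    aIDE f = quadraticInP (pdx (pdx f)) (pdy (pdx f)) (pdy (pdy f)) :=
  rfl

section quadraticInP

variable {A B C : ℝ × ℝ → ℝ}

theorem hasDerivAt_quadraticInP (A B C : ℝ × ℝ → ℝ) (x y p : ℝ) :
    HasDerivAt (fun t => quadraticInP A B C (x, y, t)) (2 * B (x, y) + 2 * C (x, y) * p) p := by
  refine ((((hasDerivAt_id' p).const_mul (2 * B (x, y))).const_add (A (x, y))).add
    ((hasDerivAt_pow 2 p).const_mul (C (x, y)))).congr_deriv ?_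
  norm_num
  ring

theorem pDx_quadraticInP (hA : Differentiable ℝ A) (hB : Differentiable ℝ B)
    (hC : Differentiable ℝ C) :
    pDx (quadraticInP A B C) = quadraticInP (pdx A) (pdx B) (pdx C) := by
  funext ⟨x, y, p⟩
  exact (((hasDerivAt_pdx (hA (x, y))).add
    (((hasDerivAt_pdx (hB (x, y))).const_mul 2).mul_const p)).add
      ((hasDerivAt_pdx (hC (x, y))).mul_const (p ^ 2))).deriv

theorem pDy_quadraticInP (hA : Differentiable ℝ A) (hB : Differentiable ℝ B)
    (hC : Differentiable ℝ C) :
    pDy (quadraticInP A B C) = quadraticInP (pdy A) (pdy B) (pdy C) := by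
  funext ⟨x, y, p⟩
  exact (((hasDerivAt_pdy (hA (x, y))).add
    (((hasDerivAt_pdy (hB (x, y))).const_mul 2).mul_const p)).add
      ((hasDerivAt_pdy (hC (x, y))).mul_const (p ^ 2))).deriv

theorem pDp_inflFun_quadraticInP (hA : Differentiable ℝ A) (hB : Differentiable ℝ B)
    (hC : Differentiable ℝ C) (x y p : ℝ) :
    pDp (inflFun (quadraticInP A B C)) (x, y, p) =
      pdy A (x, y) + 2 * pdx B (x, y) + (4 * pdy B (x, y) + 2 * pdx C (x, y)) * p
        + 3 * pdy C (x, y) * p ^ 2 := by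
  have hI : (fun t => inflFun (quadraticInP A B C) (x, y, t)) = fun t =>
      quadraticInP (pdx A) (pdx B) (pdx C) (x, y, t)
        + t * quadraticInP (pdy A) (pdy B) (pdy C) (x, y, t) := by
    simp only [inflFun, pDx_quadraticInP hA hB hC, pDy_quadraticInP hA hB hC]
  rw [pDp]
  dsimp only
  rw [hI]
  refine ((hasDerivAt_quadraticInP (pdx A) (pdx B) (pdx C) x y p).add
    ((hasDerivAt_id' p).mul (hasDerivAt_quadraticInP (pdy A) (pdy B) (pdy C) x y p))).deriv.trans ?_
  simp only [quadraticInP]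
  ring

end quadraticInP

theorem pDp_inflFun_aIDE {f : ℝ × ℝ → ℝ} (hf : ContDiff ℝ 3 f) (q : ℝ × ℝ × ℝ) :
    pDp (inflFun (aIDE f)) q = 3 * pDy (aIDE f) q := by
  have hfx : ContDiff ℝ (1 + 1) (pdx f) := ContDiff.pdx (n := 2) hf
  have hfy : ContDiff ℝ (1 + 1) (pdy f) := ContDiff.pdy (n := 2) hf
  have hA : Differentiable ℝ (pdx (pdx f)) := hfx.pdx.differentiable one_ne_zero
  have hB : Differentiable ℝ (pdy (pdx f)) := hfx.pdy.differentiable one_ne_zero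
  have hC : Differentiable ℝ (pdy (pdy f)) := hfy.pdy.differentiable one_ne_zero
  have hBx : pdx (pdy (pdx f)) = pdy (pdx (pdx f)) := pdx_pdy_comm hfx
  have hCx : pdx (pdy (pdy f)) = pdy (pdy (pdx f)) := by
    rw [pdx_pdy_comm hfy, pdx_pdy_comm (hf.of_le (by norm_num))]
  obtain ⟨x, y, p⟩ := q
  rw [aIDE_eq_quadraticInP, pDp_inflFun_quadraticInP hA hB hC, pDy_quadraticInP hA hB hC,
    hBx, hCx]
  simp only [quadraticInP]
  ring

theorem no_cusp_at_godron_general (f : ℝ × ℝ → ℝ) (hf : ContDiff ℝ (⊤ : ℕ∞) f)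
    (P : ℝ × ℝ × ℝ)
    (hPp : pDp (aIDE f) P = 0)
    (hPI : inflFun (aIDE f) P = 0)
    (hgrad : ¬ (pDx (aIDE f) P = 0 ∧ pDy (aIDE f) P = 0 ∧ pDp (aIDE f) P = 0)) :
    pDp (inflFun (aIDE f)) P ≠ 0 ∧
    ∀ q : ℝ × ℝ × ℝ, pDp (inflFun (aIDE f)) q = 3 * pDy (aIDE f) q := by
  have key := pDp_inflFun_aIDE (hf.of_le (WithTop.coe_le_coe.mpr le_top))
  refine ⟨fun hIp => hgrad ?_, key⟩
  have hy : pDy (aIDE f) P = 0 := by linarith [key P]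
  have hx : pDx (aIDE f) P = 0 := by simpa [inflFun, hy] using hPI
  exact ⟨hx, hy, hPp⟩

/-- No Cusp Theorem, analytic content: at a godron `P` (a point of the
criminant lying on the flec-surface) that is not a critical point of `a^f`, one has
`∂I/∂p (P) ≠ 0`, so the flecnodal curve cannot have a cusp at the godron.
The key identity is `∂I/∂p = 3 (a^f)_y` at every point. -/
theorem no_cusp_at_godron (f : ℝ × ℝ → ℝ) (hf : ContDiff ℝ (⊤ : ℕ∞) f)
    (P : ℝ × ℝ × ℝ)
    (hP : aIDE f P = 0)
    (hPp : pDp (aIDE f) P = 0)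
    (hPI : inflFun (aIDE f) P = 0)
    (hgrad : ¬ (pDx (aIDE f) P = 0 ∧ pDy (aIDE f) P = 0 ∧ pDp (aIDE f) P = 0)) :
    pDp (inflFun (aIDE f)) P ≠ 0 ∧
    ∀ q : ℝ × ℝ × ℝ, pDp (inflFun (aIDE f)) q = 3 * pDy (aIDE f) q :=
  no_cusp_at_godron_general f hf P hPp hPI hgrad
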